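/- arXiv:2201.00793 — 3 statements merged into one kernel-verified Lean document; each statement's English description precedes it below -/
import Mathlib

section
/- Let A be a commutative Banach algebra, X a nonempty finite set, and 1 ≤ p < ∞. Suppose there exists β > 0 such that for every finite family c₁,…,cₙ of unimodular complex numbers and characters φ₁,…,φₙ ∈ Δ(A) there exists a ∈ A with ‖a‖ ≤ β and â(φᵢ) = cᵢ for all i. Then the same interpolation property holds for ℓ^p(X, A): there exists β' > 0 such that for every finite family of unimodular cᵢ and characters ψᵢ ∈ Δ(ℓ^p(X, A)) there is f ∈ ℓ^p(X, A) with ‖f‖_{p,A} ≤ β' and f̂(ψᵢ) = cᵢ. -/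
/-!
Restricting a character of `X → A` to the constant functions gives a character of `A`. So the
interpolating element `a` of `A` for the restricted characters, viewed as a constant function,
interpolates in `X → A`, and its `ℓ^p`-norm is `|X|^(1/p) ‖a‖ ≤ |X|^(1/p) β`.
-/

open WeakDual

namespace WeakDual.CharacterSpace

variable {𝕜 A B : Type*} [CommRing 𝕜] [NoZeroDivisors 𝕜] [Nontrivial 𝕜] [TopologicalSpace 𝕜]
  [ContinuousAdd 𝕜] [ContinuousConstSMul 𝕜 𝕜] [Semiring A] [TopologicalSpace A] [Algebra 𝕜 A]
  [Semiring B] [TopologicalSpace B] [Algebra 𝕜 B]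

noncomputable def comap (f : A →A[𝕜] B) (φ : characterSpace 𝕜 B) : characterSpace 𝕜 A :=
  ⟨(toCLM φ).comp f.toContinuousLinearMap, by
    rw [eq_set_map_one_map_mul]
    exact ⟨show φ (f 1) = 1 by simp, fun x y => show φ (f (x * y)) = φ (f x) * φ (f y) by simp⟩⟩

end WeakDual.CharacterSpace

def Pi.constContinuousAlgHom (R ι B : Type*) [CommSemiring R] [Semiring B] [Algebra R B]
    [TopologicalSpace B] : B →A[R] (ι → B) :=
  { Pi.constAlgHom R ι B with }

theorem Real.rpow_one_div_sum_const_rpow {ι : Type*} [Fintype ι] {p t : ℝ} (hp : p ≠ 0)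
    (ht : 0 ≤ t) : (∑ _i : ι, t ^ p) ^ (1 / p) = (Fintype.card ι : ℝ) ^ (1 / p) * t := by
  rw [Finset.sum_const, nsmul_eq_mul, Finset.card_univ,
    Real.mul_rpow (Nat.cast_nonneg _) (Real.rpow_nonneg ht p), one_div,
    Real.rpow_rpow_inv ht hp]

theorem lp_interpolation_of_interpolation_general {X A : Type*} [Fintype X] [Nonempty X]
    [NormedCommRing A] [NormedAlgebra ℂ A]
    (p : ℝ) (hp : 1 ≤ p)
    (β : ℝ) (hβ : 0 < β)
    (hA : ∀ (n : ℕ) (c : Fin n → ℂ), (∀ i, ‖c i‖ = 1) →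
      ∀ φ : Fin n → characterSpace ℂ A,
        ∃ a : A, ‖a‖ ≤ β ∧ ∀ i, φ i a = c i) :
    ∃ β' > (0 : ℝ), ∀ (n : ℕ) (c : Fin n → ℂ), (∀ i, ‖c i‖ = 1) →
      ∀ ψ : Fin n → characterSpace ℂ (X → A),
        ∃ f : X → A, (∑ x : X, ‖f x‖ ^ p) ^ (1 / p) ≤ β' ∧ ∀ i, ψ i f = c i := by
  refine ⟨(Fintype.card X : ℝ) ^ (1 / p) * β, by positivity, fun n c hc ψ => ?_⟩
  obtain ⟨a, ha, hψa⟩ :=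
    hA n c hc fun i => CharacterSpace.comap (Pi.constContinuousAlgHom ℂ X A) (ψ i)
  refine ⟨fun _ => a, ?_, hψa⟩
  rw [Real.rpow_one_div_sum_const_rpow (by linarith) (norm_nonneg a)]
  gcongr

/-- Let `A` be a commutative Banach algebra, `X` a nonempty finite set
and `1 ≤ p < ∞`. If unimodular interpolation with a uniform bound `β` holds for the
characters of `A`, then it holds (with some bound `β'`, in the `ℓ^p`-norm) for the
characters of `ℓ^p(X, A)`, i.e. of the algebra `X → A` with pointwise product. -/
theorem lp_interpolation_of_interpolation {X A : Type*} [Fintype X] [Nonempty X]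
    [NormedCommRing A] [NormedAlgebra ℂ A] [CompleteSpace A]
    (p : ℝ) (hp : 1 ≤ p)
    (β : ℝ) (hβ : 0 < β)
    (hA : ∀ (n : ℕ) (c : Fin n → ℂ), (∀ i, ‖c i‖ = 1) →
      ∀ φ : Fin n → characterSpace ℂ A,
        ∃ a : A, ‖a‖ ≤ β ∧ ∀ i, φ i a = c i) :
    ∃ β' > (0 : ℝ), ∀ (n : ℕ) (c : Fin n → ℂ), (∀ i, ‖c i‖ = 1) →
      ∀ ψ : Fin n → characterSpace ℂ (X → A),
        ∃ f : X → A, (∑ x : X, ‖f x‖ ^ p) ^ (1 / p) ≤ β' ∧ ∀ i, ψ i f = c i :=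
  lp_interpolation_of_interpolation_general p hp β hβ hA
end

section
/- Let A be a commutative Banach algebra, X a nonempty set, and 1 ≤ p < ∞. Suppose there exists β > 0 such that for every finite family of unimodular complex numbers cᵢ and characters ψᵢ ∈ Δ(ℓ^p(X, A)) there is f ∈ ℓ^p(X, A) with ‖f‖_{p,A} ≤ β and f̂(ψᵢ) = cᵢ. Then the same property holds for A: for every finite family of unimodular cᵢ and φᵢ ∈ Δ(A), there is a ∈ A with ‖a‖_A ≤ β and â(φᵢ) = cᵢ. -/
open WeakDual
open scoped ENNReal

/-! Composing a character `φ` of `A` with evaluation at a point `x₀` gives a character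
`x₀ ⊗ φ` of `ℓ^p(X, A)`. Interpolating with these characters produces `f`, and `a = f x₀`
works because evaluation is a contraction `‖f x₀‖ ≤ ‖f‖_p`. -/

namespace WeakDual.CharacterSpace

variable {X A : Type*} [NormedRing A] [NormedAlgebra ℂ A] (p : ℝ≥0∞)

noncomputable def lpEvalₗ (φ : characterSpace ℂ A) (x₀ : X) :
    lp (fun _ : X => A) p →ₗ[ℂ] ℂ :=
  (toAlgHom φ).toLinearMap ∘ₗ lp.evalₗ (fun _ : X => A) p x₀

@[simp]
theorem lpEvalₗ_apply (φ : characterSpace ℂ A) (x₀ : X) (f : lp (fun _ : X => A) p) :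
    lpEvalₗ p φ x₀ f = φ (f x₀) :=
  rfl

theorem lpEvalₗ_ne_zero (φ : characterSpace ℂ A) (x₀ : X) : lpEvalₗ p φ x₀ ≠ 0 := by
  classical
  intro h
  have h₁ := LinearMap.congr_fun h (lp.single p x₀ 1)
  rw [lpEvalₗ_apply, lp.single_apply_self, map_one, LinearMap.zero_apply] at h₁
  exact one_ne_zero h₁

theorem lpEvalₗ_map_mul (φ : characterSpace ℂ A) (x₀ : X) {f g h : lp (fun _ : X => A) p}
    (hfg : ∀ x, h x = f x * g x) : lpEvalₗ p φ x₀ h = lpEvalₗ p φ x₀ f * lpEvalₗ p φ x₀ g := by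
  simp only [lpEvalₗ_apply, hfg, map_mul]

end WeakDual.CharacterSpace

theorem interpolation_of_lp_interpolation_general {X A : Type*} [Nonempty X]
    [NormedCommRing A] [NormedAlgebra ℂ A]
    (p : ℝ≥0∞) [Fact (1 ≤ p)]
    (β : ℝ)
    (hlp : ∀ (n : ℕ) (c : Fin n → ℂ), (∀ i, ‖c i‖ = 1) →
      ∀ ψ : Fin n → (lp (fun _ : X => A) p →ₗ[ℂ] ℂ),
        (∀ i, ψ i ≠ 0) →
        (∀ (i : Fin n) (f g h : lp (fun _ : X => A) p),
          (∀ x, h x = f x * g x) → ψ i h = ψ i f * ψ i g) →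
        ∃ f : lp (fun _ : X => A) p, ‖f‖ ≤ β ∧ ∀ i, ψ i f = c i) :
    ∀ (n : ℕ) (c : Fin n → ℂ), (∀ i, ‖c i‖ = 1) →
      ∀ φ : Fin n → characterSpace ℂ A,
        ∃ a : A, ‖a‖ ≤ β ∧ ∀ i, φ i a = c i := by
  intro n c hc φ
  obtain ⟨x₀⟩ := ‹Nonempty X›
  obtain ⟨f, hf, hfc⟩ := hlp n c hc (fun i => CharacterSpace.lpEvalₗ p (φ i) x₀)
    (fun i => CharacterSpace.lpEvalₗ_ne_zero p (φ i) x₀)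
    (fun i _ _ _ => CharacterSpace.lpEvalₗ_map_mul p (φ i) x₀)
  have hp : p ≠ 0 := (zero_lt_one.trans_le Fact.out).ne'
  exact ⟨f x₀, (lp.norm_apply_le_norm hp f x₀).trans hf, hfc⟩

/-- Let `A` be a commutative Banach algebra, `X` a nonempty set and
`1 ≤ p < ∞`. If unimodular interpolation with uniform bound `β` holds for the characters
of `ℓ^p(X, A)` (nonzero multiplicative linear functionals), then it holds for the
characters of `A` with the same bound `β`. -/
theorem interpolation_of_lp_interpolation {X A : Type*} [Nonempty X]
    [NormedCommRing A] [NormedAlgebra ℂ A] [CompleteSpace A]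
    (p : ℝ≥0∞) [Fact (1 ≤ p)] (hp' : p ≠ ∞)
    (β : ℝ) (hβ : 0 < β)
    (hlp : ∀ (n : ℕ) (c : Fin n → ℂ), (∀ i, ‖c i‖ = 1) →
      ∀ ψ : Fin n → (lp (fun _ : X => A) p →ₗ[ℂ] ℂ),
        (∀ i, ψ i ≠ 0) →
        (∀ (i : Fin n) (f g h : lp (fun _ : X => A) p),
          (∀ x, h x = f x * g x) → ψ i h = ψ i f * ψ i g) →
        ∃ f : lp (fun _ : X => A) p, ‖f‖ ≤ β ∧ ∀ i, ψ i f = c i) :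
    ∀ (n : ℕ) (c : Fin n → ℂ), (∀ i, ‖c i‖ = 1) →
      ∀ φ : Fin n → characterSpace ℂ A,
        ∃ a : A, ‖a‖ ≤ β ∧ ∀ i, φ i a = c i :=
  interpolation_of_lp_interpolation_general p β hlp
end

section
/- Let X be a locally compact Hausdorff space and A a commutative Banach algebra whose character space Δ(A) is nonempty. Suppose there exists β > 0 such that for all unimodular complex numbers c₁,…,cₙ and characters φ₁,…,φₙ ∈ Δ(A) there exists a ∈ A with ‖a‖ ≤ β and â(φᵢ) = cᵢ. Then the analogous property holds for C₀(X, A): for all unimodular c₁,…,cₙ and characters ψᵢ of C₀(X, A) of the form ψᵢ = xᵢ ⊗ φᵢ (with (xᵢ ⊗ φᵢ)(f) = φᵢ(f(xᵢ))), there exists f ∈ C₀(X, A) with ‖f‖_{∞,A} ≤ β and f̂(ψᵢ) = cᵢ. -/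
open scoped ZeroAtInfty
open WeakDual

namespace ZeroAtInftyContinuousMap

variable {X E : Type*} [TopologicalSpace X] [NormedAddCommGroup E] [NormedSpace ℝ E]

def ofHasCompactSupportSmul (g : C(X, ℝ)) (hg : HasCompactSupport g) (a : E) : C₀(X, E) where
  toFun y := g y • a
  continuous_toFun := (map_continuous g).smul continuous_const
  zero_at_infty' := (hg.smul_right (f' := fun _ => a)).is_zero_at_infty

theorem exists_norm_le_eqOn_const [RegularSpace X] [LocallyCompactSpace X] {K : Set X}
    (hK : IsCompact K) (a : E) : ∃ f : C₀(X, E), ‖f‖ ≤ ‖a‖ ∧ ∀ x ∈ K, f x = a := by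
  obtain ⟨g, hg_one, -, hg_supp, hg_mem⟩ :=
    exists_continuous_one_zero_of_isCompact hK isClosed_empty (Set.disjoint_empty K)
  refine ⟨ofHasCompactSupportSmul g hg_supp a, ?_, fun x hx => ?_⟩
  · rw [← norm_toBCF_eq_norm, BoundedContinuousFunction.norm_le (norm_nonneg a)]
    intro y
    calc ‖g y • a‖ = |g y| * ‖a‖ := by rw [norm_smul, Real.norm_eq_abs]
      _ ≤ 1 * ‖a‖ := by
        gcongr
        rw [abs_of_nonneg (hg_mem y).1]
        exact (hg_mem y).2
      _ = ‖a‖ := one_mul _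
  · change g x • a = a
    rw [hg_one hx, Pi.one_apply, one_smul]

end ZeroAtInftyContinuousMap

theorem zeroAtInfty_interpolation_general {X A : Type*} [TopologicalSpace X]
    [LocallyCompactSpace X] [T2Space X]
    [NormedCommRing A] [NormedAlgebra ℂ A]
    (β : ℝ)
    (hA : ∀ (n : ℕ) (c : Fin n → ℂ), (∀ i, ‖c i‖ = 1) →
      ∀ φ : Fin n → characterSpace ℂ A,
        ∃ a : A, ‖a‖ ≤ β ∧ ∀ i, φ i a = c i) :
    ∀ (n : ℕ) (c : Fin n → ℂ), (∀ i, ‖c i‖ = 1) →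
      ∀ (x : Fin n → X) (φ : Fin n → characterSpace ℂ A),
        ∃ f : C₀(X, A), ‖f‖ ≤ β ∧ ∀ i, φ i (f (x i)) = c i := by
  intro n c hc x φ
  obtain ⟨a, ha, ha_interp⟩ := hA n c hc φ
  obtain ⟨f, hf_norm, hf_eq⟩ :=
    ZeroAtInftyContinuousMap.exists_norm_le_eqOn_const (Set.finite_range x).isCompact a
  exact ⟨f, hf_norm.trans ha, fun i => by rw [hf_eq _ (Set.mem_range_self i), ha_interp]⟩

/-- Let `X` be a locally compact Hausdorff space and `A` a commutative
Banach algebra with nonempty character space. If unimodular interpolation with bound `β`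
holds for the characters of `A`, then for all unimodular `c₁, …, cₙ` and characters of
`C₀(X, A)` of the form `xᵢ ⊗ φᵢ` (acting by `f ↦ φᵢ (f xᵢ)`), there is `f ∈ C₀(X, A)`
with `‖f‖ ≤ β` interpolating them. -/
theorem zeroAtInfty_interpolation {X A : Type*} [TopologicalSpace X]
    [LocallyCompactSpace X] [T2Space X]
    [NormedCommRing A] [NormedAlgebra ℂ A] [CompleteSpace A]
    [Nonempty (characterSpace ℂ A)]
    (β : ℝ) (hβ : 0 < β)
    (hA : ∀ (n : ℕ) (c : Fin n → ℂ), (∀ i, ‖c i‖ = 1) →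
      ∀ φ : Fin n → characterSpace ℂ A,
        ∃ a : A, ‖a‖ ≤ β ∧ ∀ i, φ i a = c i) :
    ∀ (n : ℕ) (c : Fin n → ℂ), (∀ i, ‖c i‖ = 1) →
      ∀ (x : Fin n → X) (φ : Fin n → characterSpace ℂ A),
        ∃ f : C₀(X, A), ‖f‖ ≤ β ∧ ∀ i, φ i (f (x i)) = c i :=
  zeroAtInfty_interpolation_general β hA
end
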